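/- arXiv:1512.07009 — 8 statements merged into one kernel-verified Lean document; each statement's English description precedes it below -/
import Mathlib

section
/- Let A be a finite set, B ⊆ A, and suppose (C,D) is a B-blocker with respect to a set F of idempotent operations on A: D is closed under all operations in F, ∅ ≠ C ⊊ D, C ∩ B = ∅, D ∩ B ≠ ∅, and for every n, the set Dⁿ \ (D\C)ⁿ is closed under the coordinatewise action of all operations in F. Then no operation t ∈ F (of any arity n) witnesses absorption of B, i.e., there exist arguments a_1,...,a_n with at most one a_i outside B such that t(a_1,...,a_n) ∉ B. -/
/-- if `(C,D)` is a `B`-blocker with respect to a set `F` of idempotent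
operations on a finite set `A`, then no operation of `F` witnesses absorption of `B`. -/
theorem stmt5 {A : Type*} [Fintype A] (B : Set A)
    (F : ∀ n : ℕ, Set ((Fin n → A) → A))
    (hidem : ∀ n, ∀ f ∈ F n, ∀ a : A, f (fun _ => a) = a)
    (C D : Set A)
    (hD : ∀ n, ∀ f ∈ F n, ∀ x : Fin n → A, (∀ i, x i ∈ D) → f x ∈ D)
    (hCne : C.Nonempty) (hCD : C ⊂ D) (hCB : C ∩ B = ∅) (hDB : (D ∩ B).Nonempty)
    (hblk : ∀ k n : ℕ, ∀ f ∈ F n, ∀ x : Fin n → Fin k → A,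
      (∀ j, x j ∈ {y : Fin k → A | (∀ i, y i ∈ D) ∧ ¬(∀ i, y i ∈ D \ C)}) →
      (fun i => f (fun j => x j i)) ∈ {y : Fin k → A | (∀ i, y i ∈ D) ∧ ¬(∀ i, y i ∈ D \ C)}) :
    ∀ n, ∀ t ∈ F n, ∃ x : Fin n → A,
      (∀ j k : Fin n, x j ∉ B → x k ∉ B → j = k) ∧ t x ∉ B := by
  intro n t ht
  obtain ⟨c, hcC⟩ := hCne
  obtain ⟨d, hdD, hdB⟩ := hDB
  have hcD : c ∈ D := hCD.1 hcC
  have hcB : c ∉ B := fun hb => by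
    have : c ∈ C ∩ B := ⟨hcC, hb⟩
    rw [hCB] at this; exact this
  by_contra h
  push_neg at h
  -- rows of the matrix
  set row : Fin n → Fin n → A := fun j i => if i = j then c else d with hrow
  have hrow_one : ∀ j, ∀ i₁ i₂ : Fin n, row j i₁ ∉ B → row j i₂ ∉ B → i₁ = i₂ := by
    intro j i₁ i₂ h1 h2
    by_cases e1 : i₁ = j
    · by_cases e2 : i₂ = j
      · rw [e1, e2]
      · exact absurd hdB (by simpa [hrow, e2] using h2)
    · exact absurd hdB (by simpa [hrow, e1] using h1)
  have hB : ∀ j, t (row j) ∈ B := fun j => h (row j) (hrow_one j)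
  have key := hblk n n t ht row (by
    intro j
    refine ⟨fun i => ?_, fun hall => ?_⟩
    · by_cases e : i = j <;> simp [hrow, e, hcD, hdD]
    · have := hall j
      simp [hrow] at this
      exact this.2 hcC)
  obtain ⟨hDall, hnot⟩ := key
  obtain ⟨i, hi⟩ := not_forall.mp hnot
  have hcol : (fun j => row j i) = row i := by
    funext j
    simp only [hrow]
    by_cases e : i = j
    · simp [e]
    · rw [if_neg e, if_neg (fun h : j = i => e h.symm)]
  have hiD : t (fun j => row j i) ∈ D := hDall i
  have hiC : t (fun j => row j i) ∈ C := by
    by_contra hc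
    exact hi ⟨hiD, hc⟩
  have : t (fun j => row j i) ∈ C ∩ B := ⟨hiC, by rw [hcol]; exact hB i⟩
  rw [hCB] at this
  exact this
end

section
/- Let A be a set, E, F ⊆ A × A, a, b, a', b' ∈ A with (a,b), (a',b') ∈ E, and let d_0,...,d_n be ternary operations on A, acting coordinatewise on pairs, such that d_0(x,y,z)=x, d_n(x,y,z)=z, d_i(x,y,y)=d_{i+1}(x,x,y), each d_i preserves both E and F (applied coordinatewise to triples of edges), and d_i(e, f, e') ∈ E whenever e, e' ∈ E and f ∈ F. If there is a fence of even length from a to a' in F, then there is a fence of even length from a to a' in E. -/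
/-- if a Jónsson chain witnesses that `E` Jónsson absorbs `F`
(coordinatewise on pairs), `(a,b), (a',b') ∈ E`, and there is a fence of even length
from `a` to `a'` in `F`, then there is a fence of even length from `a` to `a'` in `E`.
A fence `p 0, …, p k` uses forward edges at (0-based) even steps and backward edges at
odd steps. -/
theorem stmt8 {A : Type*} (E F : Set (A × A)) (a b a' b' : A)
    (hab : (a, b) ∈ E) (hab' : (a', b') ∈ E)
    (n : ℕ) (d : ℕ → A → A → A → A)
    (h0 : ∀ x y z : A, d 0 x y z = x) (hn : ∀ x y z : A, d n x y z = z)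
    (hchain : ∀ i < n, ∀ x y : A, d i x y y = d (i + 1) x x y)
    (hE : ∀ i ≤ n, ∀ u v w : A × A, u ∈ E → v ∈ E → w ∈ E →
      (d i u.1 v.1 w.1, d i u.2 v.2 w.2) ∈ E)
    (hF : ∀ i ≤ n, ∀ u v w : A × A, u ∈ F → v ∈ F → w ∈ F →
      (d i u.1 v.1 w.1, d i u.2 v.2 w.2) ∈ F)
    (habs : ∀ i ≤ n, ∀ u v w : A × A, u ∈ E → v ∈ F → w ∈ E →
      (d i u.1 v.1 w.1, d i u.2 v.2 w.2) ∈ E)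
    (hfence : ∃ (k : ℕ) (p : ℕ → A), Even k ∧ p 0 = a ∧ p k = a' ∧
      ∀ i < k, (Even i → (p i, p (i + 1)) ∈ F) ∧ (¬Even i → (p (i + 1), p i) ∈ F)) :
    ∃ (k : ℕ) (p : ℕ → A), Even k ∧ p 0 = a ∧ p k = a' ∧
      ∀ i < k, (Even i → (p i, p (i + 1)) ∈ E) ∧ (¬Even i → (p (i + 1), p i) ∈ E) := by
  obtain ⟨k, p, hk, hp0, hpk, hpF⟩ := hfence
  rcases Nat.eq_zero_or_pos k with hk0 | hkpos
  · subst hk0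
    exact ⟨0, fun _ => a, Even.zero, rfl, by rw [← hp0, hpk],
      fun i hi => absurd hi (Nat.not_lt_zero i)⟩
  · set q : ℕ → A := fun m =>
      d (min (m / k) n) (if Even (m % k) then a else b) (p (m % k))
        (if Even (m % k) then a' else b') with hq
    refine ⟨(n + 1) * k, q, hk.mul_left _, ?_, ?_, ?_⟩
    · simp [hq, h0, hp0]
    · have h1 : ((n + 1) * k) / k = n + 1 := Nat.mul_div_cancel _ hkpos
      have h2 : ((n + 1) * k) % k = 0 := Nat.mul_mod_left _ _
      simp [hq, h1, h2, hn]
    · intro m hm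
      have hj : m % k < k := Nat.mod_lt _ hkpos
      have hi : m / k ≤ n := by
        have h := (Nat.div_lt_iff_lt_mul hkpos).2 hm
        omega
      have hmin : min (m / k) n = m / k := min_eq_left hi
      have hpar : Even m ↔ Even (m % k) := by
        conv_lhs => rw [← Nat.div_add_mod m k]
        simp [Nat.even_add, hk.mul_right (m / k)]
      rcases Nat.lt_or_ge (m % k + 1) k with hlt | hge
      · -- interior step within one copy of the fence
        have hdiv : (m + 1) / k = m / k := by
          conv_lhs => rw [← Nat.div_add_mod m k]
          rw [Nat.add_assoc, Nat.mul_add_div hkpos, Nat.div_eq_of_lt hlt, Nat.add_zero]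
        have hmod : (m + 1) % k = m % k + 1 := by
          conv_lhs => rw [← Nat.div_add_mod m k]
          rw [Nat.add_assoc, Nat.mul_add_mod, Nat.mod_eq_of_lt hlt]
        constructor
        · intro hme
          have hje : Even (m % k) := hpar.1 hme
          have hjo : ¬ Even (m % k + 1) := by simp [Nat.even_add_one, hje]
          have h := habs (m / k) hi (a, b) (p (m % k), p (m % k + 1)) (a', b') hab
            ((hpF (m % k) hj).1 hje) hab'
          simpa [hq, hdiv, hmod, hmin, hje, hjo] using h
        · intro hmo
          have hjo : ¬ Even (m % k) := fun h => hmo (hpar.2 h)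
          have hje : Even (m % k + 1) := Nat.even_add_one.2 hjo
          have h := habs (m / k) hi (a, b) (p (m % k + 1), p (m % k)) (a', b') hab
            ((hpF (m % k) hj).2 hjo) hab'
          simpa [hq, hdiv, hmod, hmin, hje, hjo] using h
      · -- junction step between two copies of the fence
        have heq : m % k + 1 = k := by omega
        have hdiv : (m + 1) / k = m / k + 1 := by
          conv_lhs => rw [← Nat.div_add_mod m k]
          rw [Nat.add_assoc, heq, Nat.mul_add_div hkpos, Nat.div_self hkpos]
        have hmod : (m + 1) % k = 0 := by
          conv_lhs => rw [← Nat.div_add_mod m k]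
          rw [Nat.add_assoc, heq, Nat.mul_add_mod, Nat.mod_self]
        have hjo : ¬ Even (m % k) := by
          intro h
          rcases hk with ⟨c, hc⟩
          rcases h with ⟨e, he⟩
          omega
        have hqm : q m = d (m / k) b (p (m % k)) b' := by
          simp [hq, hmin, hjo]
        have hnext : q (m + 1) = d (m / k) a (p k) a' := by
          rcases Nat.lt_or_ge (m / k) n with hin | hin
          · have hmin2 : min (m / k + 1) n = m / k + 1 := min_eq_left hin
            simp only [hq, hdiv, hmod, hmin2, Even.zero, if_true, hp0, hpk]
            exact (hchain (m / k) hin a a').symm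
          · have hin' : m / k = n := le_antisymm hi hin
            simp [hq, hdiv, hmod, hin', hn]
        constructor
        · intro hme
          exact absurd (hpar.1 hme) hjo
        · intro _
          have h := habs (m / k) hi (a, b) (p (m % k + 1), p (m % k)) (a', b') hab
            ((hpF (m % k) hj).2 hjo) hab'
          rw [heq] at h
          rw [hnext, hqm]
          exact h
end

section
/- Let A be a set, E, F ⊆ A × A, a, b ∈ A with (a,a), (b,b) ∈ E, and let d_0,...,d_n be ternary operations on A such that d_0(x,y,z)=x, d_n(x,y,z)=z, d_i(x,y,y)=d_{i+1}(x,x,y) for all i, each d_i preserves E and F coordinatewise, and d_i(e,f,e') ∈ E whenever e,e' ∈ E, f ∈ F (coordinatewise on pairs). If there is a directed path from a to b in the digraph (A, F), then there is a directed path from a to b in the digraph (A, E). -/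
/-- if a Jónsson chain witnesses that `E` Jónsson absorbs `F`
(coordinatewise on pairs), `(a,a), (b,b) ∈ E`, and there is a directed path from
`a` to `b` in the digraph `(A, F)`, then there is a directed path from `a` to `b`
in `(A, E)`. -/
theorem stmt9 {A : Type*} (E F : Set (A × A)) (a b : A)
    (haa : (a, a) ∈ E) (hbb : (b, b) ∈ E)
    (n : ℕ) (d : ℕ → A → A → A → A)
    (h0 : ∀ x y z : A, d 0 x y z = x) (hn : ∀ x y z : A, d n x y z = z)
    (hchain : ∀ i < n, ∀ x y : A, d i x y y = d (i + 1) x x y)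
    (hE : ∀ i ≤ n, ∀ u v w : A × A, u ∈ E → v ∈ E → w ∈ E →
      (d i u.1 v.1 w.1, d i u.2 v.2 w.2) ∈ E)
    (hF : ∀ i ≤ n, ∀ u v w : A × A, u ∈ F → v ∈ F → w ∈ F →
      (d i u.1 v.1 w.1, d i u.2 v.2 w.2) ∈ F)
    (habs : ∀ i ≤ n, ∀ u v w : A × A, u ∈ E → v ∈ F → w ∈ E →
      (d i u.1 v.1 w.1, d i u.2 v.2 w.2) ∈ E)
    (hpath : ∃ (k : ℕ) (p : ℕ → A), p 0 = a ∧ p k = b ∧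
      ∀ i < k, (p i, p (i + 1)) ∈ F) :
    ∃ (k : ℕ) (p : ℕ → A), p 0 = a ∧ p k = b ∧
      ∀ i < k, (p i, p (i + 1)) ∈ E := by

  obtain ⟨k, p, hp0, hpk, hpF⟩ := hpath
  rcases Nat.eq_zero_or_pos k with hk | hk
  · subst hk
    exact ⟨0, fun _ => a, rfl, hp0 ▸ hpk, fun i hi => absurd hi (Nat.not_lt_zero i)⟩
  rcases Nat.eq_zero_or_pos n with hn0 | hn0
  · subst hn0
    have hab : a = b := (h0 a a b).symm.trans (hn a a b)
    exact ⟨0, fun _ => a, rfl, hab, fun i hi => absurd hi (Nat.not_lt_zero i)⟩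
  refine ⟨n * k, fun m => d (m / k) a (p (m % k)) b, ?_, ?_, ?_⟩
  · simp [Nat.zero_div, Nat.zero_mod, hp0, h0]
  · simp [Nat.mul_div_cancel _ hk, Nat.mul_mod_left, hp0, hn]
  · intro m hm
    have hi : m / k < n := (Nat.div_lt_iff_lt_mul hk).mpr hm
    have hdm := Nat.div_add_mod m k
    have hmlt : m % k < k := Nat.mod_lt m hk
    show (d (m / k) a (p (m % k)) b, d ((m + 1) / k) a (p ((m + 1) % k)) b) ∈ E
    by_cases hj : m % k + 1 < k
    · have heq : m + 1 = k * (m / k) + (m % k + 1) := by omega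
      have hdiv : (m + 1) / k = m / k := by
        rw [heq, Nat.mul_add_div hk, Nat.div_eq_of_lt hj, Nat.add_zero]
      have hmod : (m + 1) % k = m % k + 1 := by
        rw [heq, Nat.mul_add_mod, Nat.mod_eq_of_lt hj]
      rw [hdiv, hmod]
      exact habs _ hi.le (a, a) (p (m % k), p (m % k + 1)) (b, b) haa
        (hpF _ hmlt) hbb
    · have hjk : m % k + 1 = k := by omega
      have heq : m + 1 = k * (m / k + 1) := by rw [Nat.mul_succ]; omega
      rw [heq, Nat.mul_div_cancel_left _ hk, Nat.mul_mod_right, hp0]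
      have key := habs _ hi.le (a, a) (p (m % k), p (m % k + 1)) (b, b) haa
        (hpF _ hmlt) hbb
      rw [hjk, hpk] at key
      rw [← hchain (m / k) hi a b]
      exact key
end

section
/- Let A be a finite set, F a set of operations on A, and B ⊆ A closed under all operations in F. If there exists a B-essential invariant relation R ⊆ A^k of arity k (with respect to F), then for every j < k there exists a B-essential invariant relation of arity j. In other words, the set of arities of B-essential invariant relations is a downward-closed subset of the positive integers. -/
/-- A relation `R ⊆ A^ι` is invariant under (closed under the coordinatewise action of)
every operation of the family `F`. -/
def ClosedUnder {A : Type*} (F : ∀ n : ℕ, Set ((Fin n → A) → A))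
    {ι : Type*} (R : Set (ι → A)) : Prop :=
  ∀ n, ∀ f ∈ F n, ∀ x : Fin n → ι → A, (∀ j, x j ∈ R) → (fun i => f (fun j => x j i)) ∈ R

/-- `R ⊆ A^k` is `B`-essential: `R ∩ B^k = ∅` and for each coordinate `i` it contains
a tuple whose coordinates away from `i` all lie in `B`. -/
def BEssential {A : Type*} (B : Set A) {k : ℕ} (R : Set (Fin k → A)) : Prop :=
  (∀ x ∈ R, ¬∀ i, x i ∈ B) ∧ (∀ i : Fin k, ∃ x ∈ R, ∀ j : Fin k, j ≠ i → x j ∈ B)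

lemma stmt10_step {A : Type*} (F : ∀ n : ℕ, Set ((Fin n → A) → A))
    (B : Set A) (hB : ∀ n, ∀ f ∈ F n, ∀ x : Fin n → A, (∀ i, x i ∈ B) → f x ∈ B)
    (m : ℕ) (R : Set (Fin (m + 1) → A)) (hR : ClosedUnder F R) (hEss : BEssential B R) :
    ∃ S : Set (Fin m → A), ClosedUnder F S ∧ BEssential B S := by
  refine ⟨{y | ∃ b ∈ B, Fin.cons b y ∈ R}, ?_, ?_, ?_⟩
  · intro n f hf x hx
    choose b hbB hbR using hx
    have hmem := hR n f hf (fun j => Fin.cons (b j) (x j)) hbR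
    refine ⟨f b, hB n f hf b hbB, ?_⟩
    convert hmem using 1
    funext i
    refine Fin.cases ?_ (fun i => ?_) i <;> simp
  · rintro y ⟨b, hb, hyR⟩ hall
    refine hEss.1 _ hyR (fun i => ?_)
    refine Fin.cases ?_ (fun i => ?_) i
    · simpa using hb
    · simpa using hall i
  · intro i
    obtain ⟨x, hxR, hxB⟩ := hEss.2 i.succ
    refine ⟨Fin.tail x, ⟨x 0, hxB 0 (by simp [Fin.ext_iff]), ?_⟩, fun j hj => ?_⟩
    · rw [Fin.cons_self_tail]; exact hxR
    · exact hxB j.succ (by simpa [Fin.ext_iff] using hj)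

/-- the set of arities of `B`-essential invariant relations is downward
closed among positive integers. -/
theorem stmt10 {A : Type*} [Fintype A] (F : ∀ n : ℕ, Set ((Fin n → A) → A))
    (B : Set A) (hB : ∀ n, ∀ f ∈ F n, ∀ x : Fin n → A, (∀ i, x i ∈ B) → f x ∈ B)
    (k : ℕ) (R : Set (Fin k → A)) (hR : ClosedUnder F R) (hEss : BEssential B R) :
    ∀ j : ℕ, 0 < j → j < k → ∃ S : Set (Fin j → A), ClosedUnder F S ∧ BEssential B S := by
  have key : ∀ m : ℕ, ∀ R : Set (Fin m → A), ClosedUnder F R → BEssential B R →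
      ∀ j ≤ m, ∃ S : Set (Fin j → A), ClosedUnder F S ∧ BEssential B S := by
    intro m
    induction m with
    | zero => intro R hR hE j hj; obtain rfl : j = 0 := Nat.le_zero.mp hj; exact ⟨R, hR, hE⟩
    | succ m ih =>
      intro R hR hE j hj
      rcases Nat.eq_or_lt_of_le hj with rfl | h
      · exact ⟨R, hR, hE⟩
      · obtain ⟨S, hS, hSE⟩ := stmt10_step F B hB m R hR hE
        exact ih S hS hSE j (Nat.lt_succ_iff.mp h)
  intro j _ hjk
  exact key k R hR hEss j hjk.le
end

section
/- Let A be a finite set, F a set of idempotent operations on A closed under composition and containing all projections (a clone), and B ⊆ A closed under all operations in F. If some k-ary operation t ∈ F witnesses absorption of B (t(a_1,...,a_n) ∈ B whenever at most one argument is outside B), then there is no k-ary B-essential relation invariant under F. -/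
/-- if `F` is an idempotent clone on a finite set `A`, `B` is closed
under `F`, and some `k`-ary `t ∈ F` witnesses absorption of `B`, then there is no
`k`-ary `B`-essential relation invariant under `F`. -/
theorem stmt11 {A : Type*} [Fintype A] (F : ∀ n : ℕ, Set ((Fin n → A) → A))
    (hproj : ∀ (n : ℕ) (i : Fin n), (fun x : Fin n → A => x i) ∈ F n)
    (hcomp : ∀ (n m : ℕ) (f : (Fin n → A) → A), f ∈ F n →
      ∀ g : Fin n → (Fin m → A) → A, (∀ i, g i ∈ F m) →
      (fun x : Fin m → A => f (fun i => g i x)) ∈ F m)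
    (hidem : ∀ n, ∀ f ∈ F n, ∀ a : A, f (fun _ => a) = a)
    (B : Set A) (hB : ∀ n, ∀ f ∈ F n, ∀ x : Fin n → A, (∀ i, x i ∈ B) → f x ∈ B)
    (k : ℕ) (t : (Fin k → A) → A) (ht : t ∈ F k)
    (habs : ∀ x : Fin k → A, (∀ j l : Fin k, x j ∉ B → x l ∉ B → j = l) → t x ∈ B) :
    ¬∃ R : Set (Fin k → A), ClosedUnder F R ∧ BEssential B R := by
  rintro ⟨R, hclosed, hness, hwit⟩
  choose x hxR hxB using hwit
  have hy : (fun i => t (fun j => x j i)) ∈ R := hclosed k t ht x hxR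
  exact hness _ hy fun i => habs _ (fun j l hj hl => by
    rcases eq_or_ne j i with rfl | hji
    · rcases eq_or_ne l j with rfl | hlj
      · rfl
      · exact absurd (hxB l j hlj.symm) hl
    · exact absurd (hxB j i hji.symm) hj)
end

section
/- Let A be a finite set, F a clone of idempotent operations on A (containing projections, closed under composition), and B ⊆ A closed under F. If there is no k-ary B-essential relation invariant under F, then there exists a k-ary operation t ∈ F witnessing absorption of B, i.e., t(a_1,...,a_k) ∈ B whenever at most one argument lies outside B. -/
/-- Key lemma: if there is no `k`-ary `B`-essential invariant relation, then any
invariant relation on coordinates `ι`, with `k` pairwise disjoint "blocks" inside a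
finite support `K`, such that for each block there is a tuple in `B` on all of `K`
outside that block, contains a tuple in `B` on all of `K`. -/
lemma stmt12_key {A : Type*} (F : ∀ n : ℕ, Set ((Fin n → A) → A))
    (B : Set A) (hB : ∀ n, ∀ f ∈ F n, ∀ x : Fin n → A, (∀ i, x i ∈ B) → f x ∈ B)
    {k : ℕ}
    (hno : ¬∃ R : Set (Fin k → A), ClosedUnder F R ∧ BEssential B R)
    {ι : Type*} [DecidableEq ι] (K : Finset ι) :
    ∀ S : Set (ι → A), ClosedUnder F S →
    ∀ J : Fin k → Set ι, (∀ i, J i ⊆ (K : Set ι)) →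
    (∀ i l, i ≠ l → Disjoint (J i) (J l)) →
    (∀ i, ∃ x ∈ S, ∀ c ∈ K, c ∉ J i → x c ∈ B) →
    ∃ x ∈ S, ∀ c ∈ K, x c ∈ B := by
  classical
  induction K using Finset.strongInduction with
  | _ K ih =>
    intro S hS J hJK hdisj hwit
    by_cases hemp : ∃ i, J i = ∅
    · obtain ⟨i, hi⟩ := hemp
      obtain ⟨x, hxS, hx⟩ := hwit i
      exact ⟨x, hxS, fun c hc => hx c hc (by simp [hi])⟩
    push_neg at hemp
    have hne : ∀ i, (J i).Nonempty := hemp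
    choose d hd using hne
    have hdK : ∀ i, d i ∈ K := fun i => hJK i (hd i)
    have hdinj : Function.Injective d := by
      intro i l h
      by_contra hne'
      exact Set.disjoint_left.mp (hdisj i l hne') (hd i) (h ▸ hd l)
    -- for each i, an almost-in-B tuple off coordinate `d i`
    have hz : ∀ i : Fin k, ∃ z ∈ S, ∀ c ∈ K, c ≠ d i → z c ∈ B := by
      intro i
      have hsub : K.erase (d i) ⊂ K := Finset.erase_ssubset (hdK i)
      obtain ⟨z, hzS, hz⟩ := ih _ hsub S hS (fun l => J l \ {d i})
        (fun l c hc => Finset.mem_coe.mpr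
          (Finset.mem_erase.mpr ⟨by simpa using hc.2, hJK l hc.1⟩))
        (fun i' l' h => ((hdisj i' l' h).mono Set.diff_subset Set.diff_subset))
        (by
          intro l
          obtain ⟨x, hxS, hx⟩ := hwit l
          refine ⟨x, hxS, fun c hc hcl => ?_⟩
          refine hx c (Finset.mem_of_mem_erase hc) (fun hcJ => hcl ⟨hcJ, ?_⟩)
          simpa using Finset.ne_of_mem_erase hc)
      exact ⟨z, hzS, fun c hc hcd => hz c (Finset.mem_erase.mpr ⟨hcd, hc⟩)⟩
    choose z hzS hzB using hz
    -- the k-ary relation obtained by restricting/projecting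
    set T : Set (Fin k → A) :=
      {y | ∃ x, (x ∈ S ∧ ∀ c ∈ K, (∀ i, c ≠ d i) → x c ∈ B) ∧ y = fun i => x (d i)} with hT
    have hTclosed : ClosedUnder F T := by
      intro n f hf yf hyf
      choose xs hxs hys using hyf
      refine ⟨fun c => f (fun j => xs j c), ⟨hS n f hf xs fun j => (hxs j).1,
        fun c hc hcd => hB n f hf _ fun j => (hxs j).2 c hc hcd⟩, ?_⟩
      funext i
      have : ∀ j, yf j i = xs j (d i) := fun j => by rw [hys j]
      simp only [this]
    have hTcond2 : ∀ i : Fin k, ∃ y ∈ T, ∀ j, j ≠ i → y j ∈ B := by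
      intro i
      refine ⟨fun l => z i (d l), ⟨z i, ⟨hzS i, fun c hc hcd => hzB i c hc (hcd i)⟩, rfl⟩, ?_⟩
      intro j hj
      exact hzB i (d j) (hdK j) (fun h => hj (hdinj h))
    have hcond1 : ¬(∀ x ∈ T, ¬∀ i, x i ∈ B) := fun h => hno ⟨T, hTclosed, h, hTcond2⟩
    push_neg at hcond1
    obtain ⟨y, ⟨x, ⟨hxS, hxB⟩, rfl⟩, hyB⟩ := hcond1
    refine ⟨x, hxS, fun c hc => ?_⟩
    by_cases hcd : ∃ i, c = d i
    · obtain ⟨i, rfl⟩ := hcd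
      simpa using hyB i
    · push_neg at hcd
      exact hxB c hc hcd

/-- if `F` is an idempotent clone on a finite set `A`, `B` is closed
under `F`, and there is no `k`-ary `B`-essential relation invariant under `F`, then
some `k`-ary `t ∈ F` witnesses absorption of `B`. -/
theorem stmt12 {A : Type*} [Fintype A] (F : ∀ n : ℕ, Set ((Fin n → A) → A))
    (hproj : ∀ (n : ℕ) (i : Fin n), (fun x : Fin n → A => x i) ∈ F n)
    (hcomp : ∀ (n m : ℕ) (f : (Fin n → A) → A), f ∈ F n →
      ∀ g : Fin n → (Fin m → A) → A, (∀ i, g i ∈ F m) →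
      (fun x : Fin m → A => f (fun i => g i x)) ∈ F m)
    (hidem : ∀ n, ∀ f ∈ F n, ∀ a : A, f (fun _ => a) = a)
    (B : Set A) (hB : ∀ n, ∀ f ∈ F n, ∀ x : Fin n → A, (∀ i, x i ∈ B) → f x ∈ B)
    (k : ℕ)
    (hno : ¬∃ R : Set (Fin k → A), ClosedUnder F R ∧ BEssential B R) :
    ∃ t ∈ F k, ∀ x : Fin k → A,
      (∀ j l : Fin k, x j ∉ B → x l ∉ B → j = l) → t x ∈ B := by
  classical
  -- coordinates: all near-B tuples; relation: the k-ary operations of F themselves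
  set K : Finset (Fin k → A) :=
    Finset.univ.filter (fun g => ∀ j l : Fin k, g j ∉ B → g l ∉ B → j = l) with hK
  have hSclosed : ClosedUnder F (F k : Set ((Fin k → A) → A)) := by
    intro n f hf x hx
    exact hcomp n k f hf x hx
  obtain ⟨t, htF, ht⟩ := stmt12_key F B hB hno K (F k) hSclosed
    (fun i => {g : Fin k → A | g ∈ K ∧ g i ∉ B})
    (fun i g hg => hg.1)
    (by
      intro i l h
      rw [Set.disjoint_left]
      rintro g ⟨hgK, hgi⟩ ⟨_, hgl⟩
      exact h ((Finset.mem_filter.mp hgK).2 i l hgi hgl))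
    (by
      intro i
      refine ⟨fun g => g i, hproj k i, fun g hg hgJ => ?_⟩
      by_contra hgi
      exact hgJ ⟨hg, hgi⟩)
  exact ⟨t, htF, fun x hx => ht x (Finset.mem_filter.mpr ⟨Finset.mem_univ x, hx⟩)⟩
end

section
/- Let A be a finite set and F a set of idempotent operations on A. Let a ∈ A, b ∈ B ⊆ A, and suppose that for infinitely many K the subrelation of A^K generated under the coordinatewise action of F by the K tuples (a,b,...,b), (b,a,b,...,b), ..., (b,...,b,a) is B-essential. Then for every K ∈ ℕ, the relation of A^K generated by these tuples is B-essential. (That is, a single pair (a,b) works for all arities simultaneously, by the pigeonhole/restriction argument.) -/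
/-- The relation generated by `G` under the coordinatewise action of `F`. -/
def Gen {A : Type*} (F : ∀ n : ℕ, Set ((Fin n → A) → A)) {ι : Type*}
    (G : Set (ι → A)) : Set (ι → A) :=
  ⋂₀ {S | G ⊆ S ∧ ClosedUnder F S}

lemma subset_Gen {A : Type*} (F : ∀ n : ℕ, Set ((Fin n → A) → A)) {ι : Type*}
    (G : Set (ι → A)) : G ⊆ Gen F G := by
  intro x hx
  rw [Gen, Set.mem_sInter]
  exact fun S hS => hS.1 hx

lemma closed_Gen {A : Type*} (F : ∀ n : ℕ, Set ((Fin n → A) → A)) {ι : Type*}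
    (G : Set (ι → A)) : ClosedUnder F (Gen F G) := by
  intro n f hf x hx
  rw [Gen, Set.mem_sInter]
  intro S hS
  exact hS.2 n f hf x (fun j => (Set.mem_sInter.mp (hx j)) S hS)

lemma Gen_subset {A : Type*} (F : ∀ n : ℕ, Set ((Fin n → A) → A)) {ι : Type*}
    (G S : Set (ι → A)) (h1 : G ⊆ S) (h2 : ClosedUnder F S) : Gen F G ⊆ S :=
  fun _ hx => (Set.mem_sInter.mp hx) S ⟨h1, h2⟩

/-- if for infinitely many `K` the relation generated by the tuples
`(b,…,b,a,b,…,b)` (with `a` in one position) is `B`-essential, then it is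
`B`-essential for every `K`. -/
theorem stmt13 {A : Type*} [Fintype A] (F : ∀ n : ℕ, Set ((Fin n → A) → A))
    (hidem : ∀ n, ∀ f ∈ F n, ∀ a : A, f (fun _ => a) = a)
    (B : Set A) (a b : A) (hb : b ∈ B)
    (hinf : {K : ℕ | BEssential B (Gen F
      {x : Fin K → A | ∃ i : Fin K, x = fun j => if j = i then a else b})}.Infinite) :
    ∀ K : ℕ, BEssential B (Gen F
      {x : Fin K → A | ∃ i : Fin K, x = fun j => if j = i then a else b}) := by
  intro K
  obtain ⟨K', hK'mem, hKK'⟩ := hinf.exists_gt K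
  have hle : K ≤ K' := le_of_lt hKK'
  set G : Set (Fin K → A) := {x : Fin K → A | ∃ i : Fin K, x = fun j => if j = i then a else b}
    with hG
  set G' : Set (Fin K' → A) :=
    {x : Fin K' → A | ∃ i : Fin K', x = fun j => if j = i then a else b} with hG'
  -- the extension map
  set ext : (Fin K → A) → (Fin K' → A) :=
    fun x i => if h : (i : ℕ) < K then x ⟨i, h⟩ else b with hext
  set S : Set (Fin K → A) := {x | ext x ∈ Gen F G'} with hS
  -- S is closed under F
  have hSclosed : ClosedUnder F S := by
    intro n f hf x hx
    show ext (fun i => f (fun j => x j i)) ∈ Gen F G'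
    have : ext (fun i => f (fun j => x j i)) =
        fun i => f (fun j => ext (x j) i) := by
      funext i
      by_cases h : (i : ℕ) < K
      · simp only [hext, h, dif_pos]
      · simp only [hext, h, dif_neg, not_false_iff]
        exact (hidem n f hf b).symm
    rw [this]
    exact closed_Gen F G' n f hf (fun j => ext (x j)) (fun j => hx j)
  -- G ⊆ S
  have hGS : G ⊆ S := by
    rintro x ⟨i, rfl⟩
    show ext (fun j => if j = i then a else b) ∈ Gen F G'
    have : ext (fun j => if j = i then a else b) =
        fun j : Fin K' => if j = Fin.castLE hle i then a else b := by
      funext j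
      by_cases h : (j : ℕ) < K
      · simp only [hext, h, dif_pos]
        by_cases h2 : (⟨(j : ℕ), h⟩ : Fin K) = i
        · have : j = Fin.castLE hle i := by
            apply Fin.ext
            simpa using congrArg Fin.val h2
          simp [h2, this]
        · have : j ≠ Fin.castLE hle i := by
            intro hc
            apply h2
            apply Fin.ext
            simpa using congrArg Fin.val hc
          simp [h2, this]
      · have : j ≠ Fin.castLE hle i := by
          intro hc
          apply h
          have := congrArg Fin.val hc
          simp at this
          rw [this]
          exact i.isLt
        simp [hext, h, this]
    rw [this]
    exact subset_Gen F G' ⟨Fin.castLE hle i, rfl⟩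
  have hGenS : Gen F G ⊆ S := Gen_subset F G S hGS hSclosed
  constructor
  · intro x hx hall
    have hx' : ext x ∈ Gen F G' := hGenS hx
    apply hK'mem.1 (ext x) hx'
    intro i
    by_cases h : (i : ℕ) < K
    · simpa [hext, h] using hall ⟨(i : ℕ), h⟩
    · simpa [hext, h] using hb
  · intro i
    refine ⟨fun j => if j = i then a else b, subset_Gen F G ⟨i, rfl⟩, ?_⟩
    intro j hj
    simpa [hj] using hb
end

section
/- Let A be a finite set, F a set of idempotent operations on A, B ⊆ A closed under F, and suppose d_0,...,d_n is a Jónsson absorbing chain of operations (in the clone generated by F) for B in A. Fix a,c,d ∈ A and b_1,b_2 ∈ B, and let R ⊆ A³ be the relation generated under coordinatewise action of F by the triples (b_1,a,a), (b_2,c,c), (d,a,c). Then the digraph on A with edge set E = {(u,v) : ∃ b ∈ B, (b,u,v) ∈ R} contains a directed path from a to c. -/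
/-- if `B` Jónsson absorbs `A` via a chain `d 0, …, d nD` lying in the
clone generated by `F` (so each `d i` preserves every `F`-invariant ternary relation
and maps `B × A × B` into `B`), `a, c, e ∈ A`, `b₁, b₂ ∈ B`, and `R ⊆ A³` is
generated by `(b₁,a,a), (b₂,c,c), (e,a,c)` under `F`, then the digraph with edges
`{(u,v) : ∃ b ∈ B, (b,u,v) ∈ R}` has a directed path from `a` to `c`. -/
theorem stmt15 {A : Type*} [Fintype A] (F : ∀ n : ℕ, Set ((Fin n → A) → A))
    (hidem : ∀ n, ∀ f ∈ F n, ∀ x : A, f (fun _ => x) = x)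
    (B : Set A) (hB : ∀ n, ∀ f ∈ F n, ∀ x : Fin n → A, (∀ i, x i ∈ B) → f x ∈ B)
    (nD : ℕ) (d : ℕ → A → A → A → A)
    (h0 : ∀ x y z : A, d 0 x y z = x) (hnD : ∀ x y z : A, d nD x y z = z)
    (hchain : ∀ i < nD, ∀ x y : A, d i x y y = d (i + 1) x x y)
    (hdB : ∀ i ≤ nD, ∀ (b a b' : A), b ∈ B → b' ∈ B → d i b a b' ∈ B)
    (hclone : ∀ i ≤ nD, ∀ R' : Set (Fin 3 → A), ClosedUnder F R' →
      ∀ u v w : Fin 3 → A, u ∈ R' → v ∈ R' → w ∈ R' →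
        (fun j => d i (u j) (v j) (w j)) ∈ R')
    (a c e b₁ b₂ : A) (hb₁ : b₁ ∈ B) (hb₂ : b₂ ∈ B) :
    ∃ (k : ℕ) (p : ℕ → A), p 0 = a ∧ p k = c ∧
      ∀ i < k, ∃ bb ∈ B,
        (![bb, p i, p (i + 1)] : Fin 3 → A) ∈
          Gen F {x : Fin 3 → A |
            x = ![b₁, a, a] ∨ x = ![b₂, c, c] ∨ x = ![e, a, c]} := by
  classical
  set G : Set (Fin 3 → A) := {x : Fin 3 → A |
      x = ![b₁, a, a] ∨ x = ![b₂, c, c] ∨ x = ![e, a, c]} with hG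
  have hGenClosed : ClosedUnder F (Gen F G) := by
    intro n f hf x hx
    intro S hS
    exact hS.2 n f hf x (fun j => hx j S hS)
  have hGsub : G ⊆ Gen F G := by
    intro g hg S hS
    exact hS.1 hg
  refine ⟨nD, fun i => d i a a c, by simpa using h0 a a c, by simpa using hnD a a c, ?_⟩
  intro i hi
  refine ⟨d i b₁ e b₂, hdB i (le_of_lt hi) b₁ e b₂ hb₁ hb₂, ?_⟩
  have hmem := hclone i (le_of_lt hi) (Gen F G) hGenClosed
      ![b₁, a, a] ![e, a, c] ![b₂, c, c]
      (hGsub (Or.inl rfl)) (hGsub (Or.inr (Or.inr rfl))) (hGsub (Or.inr (Or.inl rfl)))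
  have heq : (fun j => d i (![b₁, a, a] j) (![e, a, c] j) (![b₂, c, c] j))
      = ![d i b₁ e b₂, d i a a c, d (i+1) a a c] := by
    funext j
    fin_cases j <;> simp [hchain i hi]
  rw [heq] at hmem
  exact hmem
end
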